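/- If R21 = (R2/R1)·(β1+σ1)/(γ1+σ1) > 1, then the quantity R* = N(β2 γ1(β1+σ1) − β1 γ2(γ1+σ1))/(β1 β2((1−ε)σ1 + γ1)) is strictly positive, and setting I2 = 0 and R2 = R* solves the I2-nullcline equation β2 − γ2 − (β2/N)(ω(0,R2) + R2) = 0, where ω(0,R2) = σ1(N(β1−γ1) − εβ1 R2)/(β1(γ1+σ1)). -/

import Mathlib

/-! The I₂-nullcline equation at `I₂ = 0` is affine in `R₂`, with slope
`-(β₂/N)·((1-ε)σ₁+γ₁)/(γ₁+σ₁) ≠ 0`, so its unique root is `R*`. The sign of `R*` is that of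
`β₂γ₁(β₁+σ₁) - β₁γ₂(γ₁+σ₁)`, which is positive exactly when `R₂₁ > 1`. -/

lemma one_lt_R21_iff {β1 β2 γ1 γ2 σ1 : ℝ} (hβ1 : 0 < β1) (hγ1 : 0 < γ1) (hγ2 : 0 < γ2)
    (hγσ : 0 < γ1 + σ1) :
    1 < ((β2 / γ2) / (β1 / γ1)) * ((β1 + σ1) / (γ1 + σ1)) ↔
      β1 * γ2 * (γ1 + σ1) < β2 * γ1 * (β1 + σ1) := by
  have hratio : ((β2 / γ2) / (β1 / γ1)) * ((β1 + σ1) / (γ1 + σ1)) =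
      β2 * γ1 * (β1 + σ1) / (β1 * γ2 * (γ1 + σ1)) := by
    field_simp
  rw [hratio, one_lt_div (by positivity)]

lemma I2_nullcline_at_root {N β1 β2 γ1 γ2 σ1 ε : ℝ} (hN : N ≠ 0) (hβ1 : β1 ≠ 0)
    (hβ2 : β2 ≠ 0) (hγσ : γ1 + σ1 ≠ 0) (hslope : (1 - ε) * σ1 + γ1 ≠ 0) :
    let R := N * (β2 * γ1 * (β1 + σ1) - β1 * γ2 * (γ1 + σ1)) /
        (β1 * β2 * ((1 - ε) * σ1 + γ1))
    β2 - γ2 - (β2 / N) * (σ1 * (N * (β1 - γ1) - ε * β1 * R) / (β1 * (γ1 + σ1)) + R) = 0 := by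
  have hslope' : σ1 * (1 - ε) + γ1 ≠ 0 := by rwa [mul_comm]
  field_simp
  ring

theorem I2_nullcline_R2_intercept_general
    (N β1 β2 γ1 γ2 σ1 ε : ℝ)
    (hN : 0 < N) (hβ1 : 0 < β1) (hβ2 : 0 < β2) (hγ1 : 0 < γ1) (hγ2 : 0 < γ2)
    (hσ1 : 0 < σ1) (hε1 : ε ≤ 1)
    (Rstar : ℝ)
    (hRstar : Rstar = N * (β2 * γ1 * (β1 + σ1) - β1 * γ2 * (γ1 + σ1)) /
        (β1 * β2 * ((1 - ε) * σ1 + γ1)))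
    (hR21 : 1 < ((β2 / γ2) / (β1 / γ1)) * ((β1 + σ1) / (γ1 + σ1))) :
    0 < Rstar ∧
    β2 - γ2 - (β2 / N) *
      (σ1 * (N * (β1 - γ1) - ε * β1 * Rstar) / (β1 * (γ1 + σ1)) + Rstar) = 0 := by
  have hγσ : 0 < γ1 + σ1 := by positivity
  have hslope : 0 < (1 - ε) * σ1 + γ1 :=
    add_pos_of_nonneg_of_pos (mul_nonneg (sub_nonneg.2 hε1) hσ1.le) hγ1
  have hnum : 0 < β2 * γ1 * (β1 + σ1) - β1 * γ2 * (γ1 + σ1) :=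
    sub_pos.2 ((one_lt_R21_iff hβ1 hγ1 hγ2 hγσ).1 hR21)
  subst hRstar
  exact ⟨by positivity,
    I2_nullcline_at_root hN.ne' hβ1.ne' hβ2.ne' hγσ.ne' hslope.ne'⟩

theorem I2_nullcline_R2_intercept
    (N β1 β2 γ1 γ2 σ1 ε : ℝ)
    (hN : 0 < N) (hβ1 : 0 < β1) (hβ2 : 0 < β2) (hγ1 : 0 < γ1) (hγ2 : 0 < γ2)
    (hσ1 : 0 < σ1) (hβ1γ1 : β1 > γ1) (hε0 : 0 ≤ ε) (hε1 : ε ≤ 1)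
    (Rstar : ℝ)
    (hRstar : Rstar = N * (β2 * γ1 * (β1 + σ1) - β1 * γ2 * (γ1 + σ1)) /
        (β1 * β2 * ((1 - ε) * σ1 + γ1)))
    (hreg : 0 + ε * Rstar < N * (1 - 1 / (β1 / γ1)))
    (hR21 : 1 < ((β2 / γ2) / (β1 / γ1)) * ((β1 + σ1) / (γ1 + σ1))) :
    0 < Rstar ∧
    β2 - γ2 - (β2 / N) *
      (σ1 * (N * (β1 - γ1) - ε * β1 * Rstar) / (β1 * (γ1 + σ1)) + Rstar) = 0 :=
  I2_nullcline_R2_intercept_general N β1 β2 γ1 γ2 σ1 ε hN hβ1 hβ2 hγ1 hγ2 hσ1 hε1 Rstar hRstar hR21
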